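/- The exponential generating function for permutations avoiding k-σ equals exp(∫ f(x) dx), where f(x) is the exponential generating function for permutations avoiding the contiguous pattern σ, σ is contiguous, and k exceeds all letters of σ. (Equivalently, g(x) = 1 + ∫ g(x) f(x) dx where g is the EGF of (k-σ)-avoiders.) -/

import Mathlib

/-- `l` is a permutation of `{1, …, n}`. -/
def IsPermOf (n : ℕ) (l : List ℕ) : Prop :=
  l.Perm ((List.range n).map (· + 1))

/-- The word `w` forms the partially ordered pattern `σ`. -/
def FormsPOP (σ w : List ℕ) : Prop :=
  w.length = σ.length ∧
  ∀ i j, i < σ.length → j < σ.length →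
    σ.getD i 0 < σ.getD j 0 → w.getD i 0 < w.getD j 0

/-- `π` contains an occurrence of the contiguous pattern `σ`. -/
def OccursContig (σ π : List ℕ) : Prop :=
  ∃ A w B, π = A ++ w ++ B ∧ FormsPOP σ w

/-- occurrence of `k-σ`: a large element to the left of a consecutive occurrence of `σ`. -/
def OccursKS (σ π : List ℕ) : Prop :=
  ∃ A x B w C, π = A ++ x :: (B ++ w ++ C) ∧ FormsPOP σ w ∧ ∀ y ∈ w, y < x

/-- Exponential generating function of a counting sequence. -/
noncomputable def egf (c : ℕ → ℕ) : PowerSeries ℚ :=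
  PowerSeries.mk fun n => (c n : ℚ) / (Nat.factorial n : ℚ)

/-- Formal integral of a power series: `∫ Σ aₙ xⁿ = Σ aₙ x^(n+1)/(n+1)`. -/
noncomputable def pintegral (F : PowerSeries ℚ) : PowerSeries ℚ :=
  PowerSeries.mk fun n => if n = 0 then 0 else (PowerSeries.coeff (R := ℚ) (n - 1)) F / (n : ℚ)


/-!
Split a permutation of `{1, …, n + 1}` at its maximum: `l = A ++ (n + 1) :: B`. An occurrence of
`σ` is nonempty and lies below its large letter, so it avoids `n + 1`; hence `l` avoids `k-σ` iff
`A` avoids `k-σ` and `B` avoids `σ` (with `n + 1` serving as `k` for any occurrence in `B`). Both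
conditions only see the relative order of the letters, so choosing the `j`-element value set of `A`
gives `g (n + 1) = ∑ C(n, j) g j f (n - j)`, the coefficient form of `g' = g f`.
-/

open Finset

theorem egf_eq_one_add_pintegral {g f : ℕ → ℕ} (h₀ : g 0 = 1)
    (hsucc : ∀ n, g (n + 1) = ∑ j ∈ range (n + 1), n.choose j * (g j * f (n - j))) :
    egf g = 1 + pintegral (egf g * egf f) := by
  ext (_ | n)
  · simp [egf, pintegral, h₀]
  · rw [map_add, PowerSeries.coeff_one, if_neg n.succ_ne_zero, zero_add]
    simp only [egf, pintegral, PowerSeries.coeff_mk, PowerSeries.coeff_mul, if_neg n.succ_ne_zero,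
      Nat.add_sub_cancel, Finset.Nat.sum_antidiagonal_eq_sum_range_succ_mk, hsucc]
    push_cast
    rw [sum_div, sum_div]
    refine sum_congr rfl fun j hj => ?_
    rw [Nat.cast_choose ℚ (Nat.lt_succ_iff.1 (mem_range.1 hj)), Nat.factorial_succ]
    push_cast
    field_simp

theorem Multiset.add_eq_val_iff {α : Type*} [DecidableEq α] {s t : Multiset α} {U : Finset α} :
    s + t = U.val ↔ ∃ S ⊆ U, s = S.val ∧ t = (U \ S).val := by
  constructor
  · intro h
    have hs : s.Nodup := Multiset.nodup_of_le (Multiset.le_add_right s t) (h ▸ U.nodup)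
    have hsS : s = s.toFinset.val := by rw [Multiset.toFinset_val, hs.dedup]
    refine ⟨s.toFinset, val_le_iff.1 ?_, hsS, ?_⟩
    · rw [← hsS, ← h]; exact Multiset.le_add_right s t
    · rw [sdiff_val, ← hsS, ← h, add_tsub_cancel_left]
  · rintro ⟨S, hSU, rfl, rfl⟩
    rw [sdiff_val, add_tsub_cancel_of_le (val_le_iff.2 hSU)]

theorem Multiset.coe_append_cons_eq_insert_val {α : Type*} [DecidableEq α] {A B : List α} {m : α}
    {U : Finset α} (hm : m ∉ U) :
    ((A ++ m :: B : List α) : Multiset α) = (insert m U).val ↔ (A : Multiset α) + B = U.val := by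
  rw [insert_val_of_notMem hm, ← Multiset.coe_add, ← Multiset.cons_coe, Multiset.add_cons,
    Multiset.cons_inj_right]

theorem List.append_append_eq_append_cons {α : Type*} {X Y Z A B : List α} {m : α}
    (h : X ++ Y ++ Z = A ++ m :: B) (hm : m ∉ Y) (hY : Y ≠ []) :
    (∃ Z₁, A = X ++ Y ++ Z₁) ∨ ∃ X₁, X = A ++ m :: X₁ ∧ B = X₁ ++ Y ++ Z := by
  rw [List.append_assoc, List.append_eq_append_iff] at h
  rcases h with ⟨t, rfl, h⟩ | ⟨_ | ⟨c, t⟩, rfl, h⟩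
  · rcases List.append_eq_append_iff.1 h with ⟨u, rfl, -⟩ | ⟨_ | ⟨c, u⟩, rfl, h'⟩
    · exact .inl ⟨u, by simp⟩
    · exact .inl ⟨[], by simp⟩
    · obtain ⟨rfl, -⟩ := List.cons_eq_cons.1 h'
      simp at hm
  · obtain ⟨y, Y, rfl⟩ := List.exists_cons_of_ne_nil hY
    obtain ⟨rfl, -⟩ := List.cons_eq_cons.1 h
    simp at hm
  · obtain ⟨rfl, rfl⟩ := List.cons_eq_cons.1 h
    exact .inr ⟨t, by simp, by simp⟩

section Arrangements

variable {α : Type*}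

def Finset.arrangements (S : Finset α) : Finset (List α) :=
  ⟨S.val.lists, Multiset.lists_nodup_finset S⟩

theorem Finset.mem_arrangements {S : Finset α} {l : List α} :
    l ∈ S.arrangements ↔ (l : Multiset α) = S.val :=
  (Multiset.mem_lists_iff _ _).trans eq_comm

theorem Finset.mem_of_mem_arrangements {S : Finset α} {l : List α} (hl : l ∈ S.arrangements)
    {a : α} (ha : a ∈ l) : a ∈ S := by
  rwa [← mem_val, ← mem_arrangements.1 hl, Multiset.mem_coe]

theorem Finset.arrangements_empty : (∅ : Finset α).arrangements = {[]} := by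
  ext l
  simp [mem_arrangements]

end Arrangements

section Relabel

variable {α : Type*} [LinearOrder α] {S T : Finset α}

def relabel (e : S ≃o T) (a : α) : α :=
  if h : a ∈ S then e ⟨a, h⟩ else a

theorem relabel_of_mem (e : S ≃o T) {a : α} (h : a ∈ S) : relabel e a = e ⟨a, h⟩ :=
  dif_pos h

theorem relabel_mem (e : S ≃o T) {a : α} (h : a ∈ S) : relabel e a ∈ T := by
  rw [relabel_of_mem e h]
  exact (e _).2

theorem relabel_symm_relabel (e : S ≃o T) {a : α} (h : a ∈ S) :
    relabel e.symm (relabel e a) = a := by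
  simp [relabel, h]

theorem strictMonoOn_relabel (e : S ≃o T) : StrictMonoOn (relabel e) S := by
  intro a ha b hb hab
  rw [relabel_of_mem e ha, relabel_of_mem e hb]
  exact e.strictMono (Subtype.mk_lt_mk.2 hab)

theorem image_relabel (e : S ≃o T) : S.image (relabel e) = T := by
  ext b
  refine ⟨fun hb => ?_, fun hb => ?_⟩
  · obtain ⟨a, ha, rfl⟩ := mem_image.1 hb
    exact relabel_mem e ha
  · exact mem_image.2 ⟨_, relabel_mem e.symm hb, relabel_symm_relabel e.symm hb⟩

theorem map_relabel_mem_arrangements (e : S ≃o T) {l : List α} (hl : l ∈ S.arrangements) :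
    l.map (relabel e) ∈ T.arrangements := by
  rw [mem_arrangements, ← Multiset.map_coe, mem_arrangements.1 hl,
    ← image_val_of_injOn (strictMonoOn_relabel e).injOn, image_relabel]

theorem map_relabel_symm_map_relabel (e : S ≃o T) {l : List α} (hl : l ∈ S.arrangements) :
    (l.map (relabel e)).map (relabel e.symm) = l := by
  rw [List.map_map]
  exact (List.map_congr_left fun a ha =>
    relabel_symm_relabel e (mem_of_mem_arrangements hl ha)).trans (List.map_id l)

end Relabel

def RelabelInvariant {α : Type*} [Preorder α] (P : List α → Prop) : Prop :=
  ∀ ⦃l : List α⦄ ⦃φ : α → α⦄, StrictMonoOn φ {a | a ∈ l} → P l → P (l.map φ)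

theorem card_filter_arrangements_congr {α : Type*} [LinearOrder α] {S T : Finset α}
    {P : List α → Prop} [DecidablePred P] (hP : RelabelInvariant P) (e : S ≃o T) :
    #{l ∈ S.arrangements | P l} = #{l ∈ T.arrangements | P l} := by
  have maps_to {S T : Finset α} (e : S ≃o T) {l : List α} (hl : l ∈ {l ∈ S.arrangements | P l}) :
      l.map (relabel e) ∈ {l ∈ T.arrangements | P l} := by
    rw [mem_filter] at hl ⊢
    exact ⟨map_relabel_mem_arrangements e hl.1,
      hP ((strictMonoOn_relabel e).mono fun a ha => mem_of_mem_arrangements hl.1 ha) hl.2⟩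
  exact card_nbij' _ _ (fun l hl => maps_to e hl) (fun l hl => maps_to e.symm hl)
    (fun l hl => map_relabel_symm_map_relabel e (mem_filter.1 hl).1)
    (fun l hl => map_relabel_symm_map_relabel e.symm (mem_filter.1 hl).1)

theorem card_filter_arrangements_insert {α : Type*} [DecidableEq α] {P Q R : List α → Prop}
    [DecidablePred P] [DecidablePred Q] [DecidablePred R] {m : α} {U : Finset α} (hm : m ∉ U)
    (hsplit : ∀ A B : List α, (A : Multiset α) + B = U.val → (P (A ++ m :: B) ↔ Q A ∧ R B)) :
    #{l ∈ (insert m U).arrangements | P l} =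
      ∑ S ∈ U.powerset, #{l ∈ S.arrangements | Q l} * #{l ∈ (U \ S).arrangements | R l} := by
  have mem_pairs (S : Finset α) (A B : List α) :
      (⟨S, A, B⟩ : Σ _ : Finset α, List α × List α) ∈ U.powerset.sigma (fun S =>
          {l ∈ S.arrangements | Q l} ×ˢ {l ∈ (U \ S).arrangements | R l}) ↔
        S ⊆ U ∧ ((A : Multiset α) = S.val ∧ Q A) ∧ (B : Multiset α) = (U \ S).val ∧ R B := by
    simp only [mem_sigma, mem_product, mem_filter, mem_powerset, mem_arrangements]
  simp_rw [← card_product, ← card_sigma]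
  refine (card_bij (fun x _ => x.2.1 ++ m :: x.2.2) ?_ ?_ ?_).symm
  · rintro ⟨S, A, B⟩ hx
    obtain ⟨hSU, ⟨hA, hQ⟩, hB, hR⟩ := (mem_pairs S A B).1 hx
    have hAB : (A : Multiset α) + B = U.val := Multiset.add_eq_val_iff.2 ⟨S, hSU, hA, hB⟩
    rw [mem_filter, mem_arrangements]
    exact ⟨(Multiset.coe_append_cons_eq_insert_val hm).2 hAB, (hsplit A B hAB).2 ⟨hQ, hR⟩⟩
  · rintro ⟨S, A, B⟩ hx ⟨S', A', B'⟩ hx' h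
    obtain ⟨hSU, ⟨hA, -⟩, hB, -⟩ := (mem_pairs S A B).1 hx
    have hAB : (A : Multiset α) + B = U.val := Multiset.add_eq_val_iff.2 ⟨S, hSU, hA, hB⟩
    have hmAB : m ∉ A ++ B := by rwa [← Multiset.mem_coe, ← Multiset.coe_add, hAB, mem_val]
    rw [List.mem_append, not_or] at hmAB
    obtain ⟨rfl, -, rfl⟩ := (List.append_cons_inj_of_notMem hmAB.1 hmAB.2).1 h
    obtain rfl : S = S' := val_inj.1 (hA.symm.trans ((mem_pairs S' _ _).1 hx').2.1.1)
    rfl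
  · intro l hl
    rw [mem_filter, mem_arrangements] at hl
    have hml : m ∈ l := by rw [← Multiset.mem_coe, hl.1]; exact mem_insert_self m U
    obtain ⟨A, B, rfl⟩ := List.append_of_mem hml
    have hAB := (Multiset.coe_append_cons_eq_insert_val hm).1 hl.1
    obtain ⟨S, hSU, hA, hB⟩ := Multiset.add_eq_val_iff.1 hAB
    obtain ⟨hQ, hR⟩ := (hsplit A B hAB).1 hl.2
    exact ⟨⟨S, A, B⟩, (mem_pairs S A B).2 ⟨hSU, ⟨hA, hQ⟩, hB, hR⟩, rfl⟩

theorem formsPOP_of_map {σ w : List ℕ} {φ : ℕ → ℕ} (hφ : StrictMonoOn φ {a | a ∈ w})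
    (h : FormsPOP σ (w.map φ)) : FormsPOP σ w := by
  obtain ⟨hlen, hlt⟩ := h
  rw [List.length_map] at hlen
  refine ⟨hlen, fun i j hi hj hij => ?_⟩
  have hi' : i < w.length := hlen ▸ hi
  have hj' : j < w.length := hlen ▸ hj
  have := hlt i j hi hj hij
  rw [List.getD_eq_getElem _ _ (by simpa using hi'), List.getD_eq_getElem _ _ (by simpa using hj'),
    List.getElem_map, List.getElem_map,
    hφ.lt_iff_lt (List.getElem_mem _) (List.getElem_mem _)] at this
  rwa [List.getD_eq_getElem _ _ hi', List.getD_eq_getElem _ _ hj']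

theorem occursContig_of_map {σ l : List ℕ} {φ : ℕ → ℕ} (hφ : StrictMonoOn φ {a | a ∈ l})
    (h : OccursContig σ (l.map φ)) : OccursContig σ l := by
  obtain ⟨A, w, B, heq, hw⟩ := h
  rw [List.append_assoc, List.map_eq_append_iff] at heq
  obtain ⟨A₀, l', rfl, rfl, heq'⟩ := heq
  obtain ⟨w₀, B₀, rfl, rfl, rfl⟩ := List.map_eq_append_iff.1 heq'
  exact ⟨A₀, w₀, B₀, by simp,
    formsPOP_of_map (hφ.mono fun a (ha : a ∈ w₀) => by simp [ha]) hw⟩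

theorem occursKS_iff {σ π : List ℕ} :
    OccursKS σ π ↔
      ∃ pre w suf, π = pre ++ w ++ suf ∧ FormsPOP σ w ∧ ∃ x ∈ pre, ∀ y ∈ w, y < x := by
  constructor
  · rintro ⟨A, x, B, w, C, rfl, hw, hlt⟩
    exact ⟨A ++ x :: B, w, C, by simp, hw, x, by simp, hlt⟩
  · rintro ⟨pre, w, suf, rfl, hw, x, hx, hlt⟩
    obtain ⟨s, t, rfl⟩ := List.append_of_mem hx
    exact ⟨s, x, t, w, suf, by simp, hw, hlt⟩

theorem occursKS_of_map {σ l : List ℕ} {φ : ℕ → ℕ} (hφ : StrictMonoOn φ {a | a ∈ l})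
    (h : OccursKS σ (l.map φ)) : OccursKS σ l := by
  obtain ⟨pre, w, suf, heq, hw, x, hx, hlt⟩ := occursKS_iff.1 h
  rw [List.append_assoc, List.map_eq_append_iff] at heq
  obtain ⟨pre₀, l', rfl, rfl, heq'⟩ := heq
  obtain ⟨w₀, suf₀, rfl, rfl, rfl⟩ := List.map_eq_append_iff.1 heq'
  obtain ⟨x₀, hx₀, rfl⟩ := List.mem_map.1 hx
  refine occursKS_iff.2 ⟨pre₀, w₀, suf₀, by simp,
    formsPOP_of_map (hφ.mono fun a (ha : a ∈ w₀) => by simp [ha]) hw, x₀, hx₀,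
    fun y hy => ?_⟩
  exact (hφ.lt_iff_lt (by simp [hy]) (by simp [hx₀])).1 (hlt _ (List.mem_map_of_mem hy))

theorem relabelInvariant_not_occursContig (σ : List ℕ) : RelabelInvariant (¬ OccursContig σ ·) :=
  fun _ _ hφ hl h => hl (occursContig_of_map hφ h)

theorem relabelInvariant_not_occursKS (σ : List ℕ) : RelabelInvariant (¬ OccursKS σ ·) :=
  fun _ _ hφ hl h => hl (occursKS_of_map hφ h)

theorem not_occursKS_nil (σ : List ℕ) : ¬ OccursKS σ [] := by
  rintro ⟨A, x, B, w, C, h, -⟩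
  simp at h

theorem occursKS_append_cons {σ A B : List ℕ} {m : ℕ} (hσ : σ ≠ [])
    (hm : ∀ y ∈ A ++ B, y < m) :
    OccursKS σ (A ++ m :: B) ↔ OccursKS σ A ∨ OccursContig σ B := by
  constructor
  · intro h
    obtain ⟨pre, w, suf, heq, hw, x, hx, hlt⟩ := occursKS_iff.1 h
    have hxm : x ≤ m := by
      have hx' : x ∈ A ++ m :: B := by rw [heq]; simp [hx]
      simp only [List.mem_append, List.mem_cons] at hx'
      rcases hx' with h | rfl | h
      · exact (hm x (by simp [h])).le
      · exact le_rfl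
      · exact (hm x (by simp [h])).le
    have hmw : m ∉ w := fun h => (hlt m h).not_ge hxm
    have hw_ne : w ≠ [] := by
      rintro rfl
      exact hσ (List.eq_nil_of_length_eq_zero hw.1.symm)
    rcases List.append_append_eq_append_cons heq.symm hmw hw_ne with ⟨Z, rfl⟩ | ⟨X, -, rfl⟩
    · exact .inl (occursKS_iff.2 ⟨pre, w, Z, rfl, hw, x, hx, hlt⟩)
    · exact .inr ⟨X, w, suf, rfl, hw⟩
  · rintro (⟨A₀, x, B₀, w, C₀, rfl, hw, hlt⟩ | ⟨P, w, Q, rfl, hw⟩)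
    · exact ⟨A₀, x, B₀, w, C₀ ++ m :: B, by simp, hw, hlt⟩
    · exact ⟨A, m, P, w, Q, by simp, hw, fun y hy => hm y (by simp [hy])⟩

noncomputable def permCount (P : List ℕ → Prop) (n : ℕ) : ℕ :=
  Nat.card {l : List ℕ // IsPermOf n l ∧ P l}

theorem isPermOf_iff_mem_arrangements {n : ℕ} {l : List ℕ} :
    IsPermOf n l ↔ l ∈ (Icc 1 n).arrangements := by
  have hIcc : (Icc 1 n).val = ((List.range n).map (· + 1) : Multiset ℕ) := by
    -- on `ℕ`, `Icc a b` is implemented as `List.range' a (b + 1 - a)`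
    show ((List.range' 1 (n + 1 - 1)) : Multiset ℕ) = _
    rw [List.range'_eq_map_range]
    simp [add_comm]
  rw [mem_arrangements, hIcc, Multiset.coe_eq_coe, IsPermOf]

theorem permCount_eq_card_filter (P : List ℕ → Prop) [DecidablePred P] (n : ℕ) :
    permCount P n = #{l ∈ (Icc 1 n).arrangements | P l} := by
  rw [permCount, ← Nat.card_eq_finsetCard]
  exact Nat.card_congr (Equiv.subtypeEquivRight fun l => by
    rw [mem_filter, isPermOf_iff_mem_arrangements])

theorem card_filter_arrangements_eq_permCount {P : List ℕ → Prop} [DecidablePred P]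
    (hP : RelabelInvariant P) (S : Finset ℕ) :
    #{l ∈ S.arrangements | P l} = permCount P #S := by
  rw [permCount_eq_card_filter]
  exact card_filter_arrangements_congr hP
    ((S.orderIsoOfFin rfl).symm.trans ((Icc 1 #S).orderIsoOfFin (by simp)))

theorem permCount_not_occursKS_zero (σ : List ℕ) : permCount (¬ OccursKS σ ·) 0 = 1 := by
  classical
  simp [permCount_eq_card_filter, arrangements_empty, filter_singleton,
    not_occursKS_nil]

theorem permCount_not_occursKS_succ {σ : List ℕ} (hσ : σ ≠ []) (n : ℕ) :
    permCount (¬ OccursKS σ ·) (n + 1) = ∑ j ∈ range (n + 1),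
      n.choose j * (permCount (¬ OccursKS σ ·) j * permCount (¬ OccursContig σ ·) (n - j)) := by
  classical
  have hsplit (A B : List ℕ) (hAB : (A : Multiset ℕ) + B = (Icc 1 n).val) :
      ¬ OccursKS σ (A ++ (n + 1) :: B) ↔ ¬ OccursKS σ A ∧ ¬ OccursContig σ B := by
    refine (occursKS_append_cons hσ fun y hy => ?_).not.trans not_or
    rw [← Multiset.mem_coe, ← Multiset.coe_add, hAB, mem_val, mem_Icc] at hy
    omega
  calc permCount (¬ OccursKS σ ·) (n + 1)
      = ∑ S ∈ (Icc 1 n).powerset, #{l ∈ S.arrangements | ¬ OccursKS σ l} *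
          #{l ∈ (Icc 1 n \ S).arrangements | ¬ OccursContig σ l} := by
        rw [permCount_eq_card_filter, ← insert_Icc_right_eq_Icc_add_one (by omega)]
        exact card_filter_arrangements_insert (by simp) hsplit
    _ = ∑ S ∈ (Icc 1 n).powerset,
          permCount (¬ OccursKS σ ·) #S * permCount (¬ OccursContig σ ·) (n - #S) := by
        refine sum_congr rfl fun S hS => ?_
        rw [card_filter_arrangements_eq_permCount (relabelInvariant_not_occursKS σ),
          card_filter_arrangements_eq_permCount (relabelInvariant_not_occursContig σ),
          card_sdiff_of_subset (mem_powerset.1 hS), Nat.card_Icc, Nat.add_sub_cancel]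
    _ = _ := by
        rw [sum_powerset_apply_card
          (fun j => permCount (¬ OccursKS σ ·) j * permCount (¬ OccursContig σ ·) (n - j)),
          Nat.card_Icc, Nat.add_sub_cancel]
        simp only [smul_eq_mul]

/-- The EGF `g` of `(k-σ)`-avoiders equals `exp(∫ f)` where `f` is the EGF of
`σ`-avoiders; equivalently (and this is how we state it, since it uniquely
determines `g` as `exp (∫ f)`), `g = 1 + ∫ g·f`. -/
theorem egf_avoid_ks (σ : List ℕ) (hσ : σ ≠ []) :
    egf (fun n => Nat.card {l : List ℕ // IsPermOf n l ∧ ¬ OccursKS σ l}) =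
      1 + pintegral
        (egf (fun n => Nat.card {l : List ℕ // IsPermOf n l ∧ ¬ OccursKS σ l}) *
         egf (fun n => Nat.card {l : List ℕ // IsPermOf n l ∧ ¬ OccursContig σ l})) :=
  egf_eq_one_add_pintegral (permCount_not_occursKS_zero σ) (permCount_not_occursKS_succ hσ)
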